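/- arXiv:hep-lat/0504019 — 2 statements merged into one kernel-verified Lean document; each statement's English description precedes it below -/
import Mathlib

section
/- Let l ≥ 0 be a real number, M ≥ 1 and R > 0 real numbers. Let (Q_k)_{k≥1} be a sequence of 2×2 complex matrices whose operator norms satisfy ‖Q_k‖ ≤ M·R^{−k} for all k ≥ 1, and let (χ_n)_{n≥0} be a sequence of vectors in ℂ² whose Euclidean norms satisfy, for every n ≥ 1, ‖χ_n‖ ≤ (1/(n(2l+1)))·Σ_{k=1}^{n} ‖Q_k‖·‖χ_{n−k}‖. Then ‖χ_n‖ ≤ M^n·R^{−n}·‖χ₀‖ for every n ≥ 0. -/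
open scoped Matrix.Norms.L2Operator

/-!
Strong induction on `n` with the majorant `bₙ = (M r)ⁿ a₀`, `r = R⁻¹`: every term of the
recursion satisfies `qₖ b_{n-k} ≤ M^{n-k+1} rⁿ a₀ ≤ bₙ` because `M ≥ 1`, so the `n` terms sum
to at most `n bₙ`, and the prefactor `1 / (n (2l+1)) ≤ 1 / n` absorbs the count.
-/

open Finset

theorem mul_pow_mul_mul_pow_sub_le {M r x : ℝ} {k n : ℕ} (hM : 1 ≤ M) (hr : 0 ≤ r)
    (hx : 0 ≤ x) (hk : 1 ≤ k) (hkn : k ≤ n) :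
    M * r ^ k * ((M * r) ^ (n - k) * x) ≤ (M * r) ^ n * x :=
  calc M * r ^ k * ((M * r) ^ (n - k) * x) = M ^ (n - k + 1) * (r ^ n * x) := by
        rw [mul_pow, ← pow_sub_mul_pow r hkn]; ring
    _ ≤ M ^ n * (r ^ n * x) :=
        mul_le_mul_of_nonneg_right (pow_le_pow_right₀ hM (by omega)) (by positivity)
    _ = (M * r) ^ n * x := by ring

theorem le_geometric_of_le_one_div_mul_sum_Icc {a q : ℕ → ℝ} {c M r : ℝ}
    (hc : 1 ≤ c) (hM : 1 ≤ M) (hr : 0 ≤ r) (ha : ∀ n, 0 ≤ a n)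
    (hq : ∀ k, 1 ≤ k → q k ≤ M * r ^ k)
    (hrec : ∀ n : ℕ, 1 ≤ n → a n ≤ 1 / (n * c) * ∑ k ∈ Icc 1 n, q k * a (n - k))
    (n : ℕ) : a n ≤ (M * r) ^ n * a 0 := by
  induction n using Nat.strong_induction_on with
  | _ n ih =>
    rcases Nat.eq_zero_or_pos n with rfl | hn
    · simp
    have hterm : ∀ k ∈ Icc 1 n, q k * a (n - k) ≤ (M * r) ^ n * a 0 := by
      intro k hk
      obtain ⟨hk1, hkn⟩ := mem_Icc.1 hk
      calc q k * a (n - k) ≤ M * r ^ k * ((M * r) ^ (n - k) * a 0) :=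
            mul_le_mul (hq k hk1) (ih (n - k) (by omega)) (ha _) (by positivity)
        _ ≤ (M * r) ^ n * a 0 := mul_pow_mul_mul_pow_sub_le hM hr (ha 0) hk1 hkn
    have hn' : (0 : ℝ) < n := by exact_mod_cast hn
    calc a n ≤ 1 / (n * c) * ∑ k ∈ Icc 1 n, q k * a (n - k) := hrec n hn
      _ ≤ 1 / (n * c) * ∑ _k ∈ Icc 1 n, (M * r) ^ n * a 0 :=
          mul_le_mul_of_nonneg_left (sum_le_sum hterm) (by positivity)
      _ = c⁻¹ * ((M * r) ^ n * a 0) := by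
          rw [sum_const, Nat.card_Icc, nsmul_eq_mul]; field_simp; push_cast; ring
      _ ≤ (M * r) ^ n * a 0 :=
          mul_le_of_le_one_left (by have := ha 0; positivity) (inv_le_one_of_one_le₀ hc)

/-- The key inductive bound on the Frobenius coefficients: if the matrix Taylor
coefficients satisfy `‖Q_k‖ ≤ M R^{-k}` and the vector coefficients satisfy
`‖χ_n‖ ≤ (1/(n(2l+1))) ∑_{k=1}^n ‖Q_k‖ ‖χ_{n-k}‖`, then
`‖χ_n‖ ≤ M^n R^{-n} ‖χ₀‖` for all `n`. -/
theorem frobenius_coefficient_bound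
    (l M R : ℝ) (hl : 0 ≤ l) (hM : 1 ≤ M) (hR : 0 < R)
    (Q : ℕ → Matrix (Fin 2) (Fin 2) ℂ)
    (χ : ℕ → EuclideanSpace ℂ (Fin 2))
    (hQ : ∀ k : ℕ, 1 ≤ k → ‖Q k‖ ≤ M * R ^ (-(k : ℤ)))
    (hχ : ∀ n : ℕ, 1 ≤ n →
      ‖χ n‖ ≤ (1 / (n * (2 * l + 1))) *
        ∑ k ∈ Finset.Icc 1 n, ‖Q k‖ * ‖χ (n - k)‖) :
    ∀ n : ℕ, ‖χ n‖ ≤ M ^ n * R ^ (-(n : ℤ)) * ‖χ 0‖ := by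
  intro n
  have hQ' : ∀ k, 1 ≤ k → ‖Q k‖ ≤ M * R⁻¹ ^ k := fun k hk => by
    simpa only [zpow_neg, zpow_natCast, inv_pow] using hQ k hk
  have key := le_geometric_of_le_one_div_mul_sum_Icc (a := fun n => ‖χ n‖) (c := 2 * l + 1)
    (by linarith) hM (inv_nonneg.2 hR.le) (fun _ => norm_nonneg _) hQ' hχ n
  simpa only [zpow_neg, zpow_natCast, mul_pow, inv_pow] using key
end

section
/- Let k₁, k₂, m₁, m₂ be positive real numbers, let Δ₁, Δ₂, δ₁, δ₂ be real numbers, and let η be a real number with −1 ≤ η ≤ 1. Then the determinant of the 2×2 complex matrix [[e^{2iΔ₁} − η·e^{2iδ₁}, i·√((k₂m₂)/(k₁m₁))·√(1−η²)·e^{i(δ₁+δ₂)}], [i·√((k₁m₁)/(k₂m₂))·√(1−η²)·e^{i(δ₁+δ₂)}, e^{2iΔ₂} − η·e^{2iδ₂}]] vanishes if and only if cos(Δ₁+Δ₂−δ₁−δ₂) = η·cos(Δ₁−Δ₂−δ₁+δ₂). -/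
noncomputable def Efn (x : ℝ) : ℂ := Complex.exp (Complex.I * x)

lemma Efn_ne (x : ℝ) : Efn x ≠ 0 := Complex.exp_ne_zero _

lemma Efn_add (x y : ℝ) : Efn (x + y) = Efn x * Efn y := by
  simp [Efn, ← Complex.exp_add, mul_add]

lemma cos_Efn (x : ℝ) : (Real.cos x : ℂ) = (Efn x + Efn (-x)) / 2 := by
  rw [Complex.ofReal_cos, Complex.cos]
  simp [Efn, mul_comm]

lemma two_cos (a b : ℝ) :
    2 * (Efn a * Efn b) * (Real.cos (a - b) : ℂ) = Efn a ^ 2 + Efn b ^ 2 := by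
  rw [cos_Efn]
  have h1 : Efn a * Efn b * Efn (a - b) = Efn a ^ 2 := by
    rw [← Efn_add, ← Efn_add, show a + b + (a - b) = a + a by ring, Efn_add]; ring
  have h2 : Efn a * Efn b * Efn (-(a - b)) = Efn b ^ 2 := by
    rw [← Efn_add, ← Efn_add, show a + b + -(a - b) = b + b by ring, Efn_add]; ring
  linear_combination h1 + h2

lemma key_id (Δ₁ Δ₂ δ₁ δ₂ η : ℝ) :
    (Efn Δ₁ ^ 2 - (η : ℂ) * Efn δ₁ ^ 2) * (Efn Δ₂ ^ 2 - (η : ℂ) * Efn δ₂ ^ 2)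
      + (1 - (η : ℂ) ^ 2) * (Efn δ₁ * Efn δ₂) ^ 2
    = 2 * (Efn Δ₁ * Efn Δ₂ * Efn δ₁ * Efn δ₂) *
        ((Real.cos (Δ₁ + Δ₂ - δ₁ - δ₂) : ℂ) - (η : ℂ) * (Real.cos (Δ₁ - Δ₂ - δ₁ + δ₂) : ℂ)) := by
  have h1 := two_cos (Δ₁ + Δ₂) (δ₁ + δ₂)
  have h2 := two_cos (Δ₁ + δ₂) (Δ₂ + δ₁)
  rw [show Δ₁ + Δ₂ - δ₁ - δ₂ = (Δ₁ + Δ₂) - (δ₁ + δ₂) by ring,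
      show Δ₁ - Δ₂ - δ₁ + δ₂ = (Δ₁ + δ₂) - (Δ₂ + δ₁) by ring]
  simp only [Efn_add] at h1 h2
  linear_combination -h1 + (η : ℂ) * h2

/-- The s-wave two-channel finite-volume quantization condition: the
determinant of the paper's Eq. (28) vanishes iff
`cos(Δ₁+Δ₂-δ₁-δ₂) = η cos(Δ₁-Δ₂-δ₁+δ₂)`. -/
theorem swave_quantization_condition
    (k₁ k₂ m₁ m₂ : ℝ) (hk₁ : 0 < k₁) (hk₂ : 0 < k₂)
    (hm₁ : 0 < m₁) (hm₂ : 0 < m₂)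
    (Δ₁ Δ₂ δ₁ δ₂ η : ℝ) (hη₁ : -1 ≤ η) (hη₂ : η ≤ 1) :
    Matrix.det
      !![Complex.exp (2 * Complex.I * Δ₁) - (η : ℂ) * Complex.exp (2 * Complex.I * δ₁),
         Complex.I * (Real.sqrt ((k₂ * m₂) / (k₁ * m₁)) : ℂ) *
           (Real.sqrt (1 - η ^ 2) : ℂ) * Complex.exp (Complex.I * (δ₁ + δ₂));
         Complex.I * (Real.sqrt ((k₁ * m₁) / (k₂ * m₂)) : ℂ) *
           (Real.sqrt (1 - η ^ 2) : ℂ) * Complex.exp (Complex.I * (δ₁ + δ₂)),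
         Complex.exp (2 * Complex.I * Δ₂) - (η : ℂ) * Complex.exp (2 * Complex.I * δ₂)]
      = 0
    ↔ Real.cos (Δ₁ + Δ₂ - δ₁ - δ₂) = η * Real.cos (Δ₁ - Δ₂ - δ₁ + δ₂) := by
  have h1 : (0:ℝ) < k₁ * m₁ := mul_pos hk₁ hm₁
  have h2 : (0:ℝ) < k₂ * m₂ := mul_pos hk₂ hm₂
  have hs : Real.sqrt ((k₂ * m₂) / (k₁ * m₁)) * Real.sqrt ((k₁ * m₁) / (k₂ * m₂)) = 1 := by
    rw [← Real.sqrt_mul (le_of_lt (div_pos h2 h1)), div_mul_div_comm, mul_comm,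
        div_self (by positivity), Real.sqrt_one]
  have hsq : Real.sqrt (1 - η ^ 2) * Real.sqrt (1 - η ^ 2) = 1 - η ^ 2 :=
    Real.mul_self_sqrt (by nlinarith)
  have hsC : (Real.sqrt ((k₂ * m₂) / (k₁ * m₁)) : ℂ) * (Real.sqrt ((k₁ * m₁) / (k₂ * m₂)) : ℂ) = 1 := by
    exact_mod_cast congrArg Complex.ofReal hs
  have hsqC : (Real.sqrt (1 - η ^ 2) : ℂ) * (Real.sqrt (1 - η ^ 2) : ℂ) = 1 - (η : ℂ) ^ 2 := by
    have := congrArg Complex.ofReal hsq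
    push_cast at this
    exact this
  have e2 : ∀ x : ℝ, Complex.exp (2 * Complex.I * x) = Efn x ^ 2 := by
    intro x
    rw [show (2 * Complex.I * x : ℂ) = Complex.I * x + Complex.I * x by ring, Complex.exp_add, Efn]
    ring
  have e1 : Complex.exp (Complex.I * ((δ₁ : ℂ) + (δ₂ : ℂ))) = Efn δ₁ * Efn δ₂ := by
    rw [← Efn_add, Efn]; push_cast; ring_nf
  rw [Matrix.det_fin_two_of, e2, e2, e2, e2, e1]
  have final :
      (Efn Δ₁ ^ 2 - (η : ℂ) * Efn δ₁ ^ 2) * (Efn Δ₂ ^ 2 - (η : ℂ) * Efn δ₂ ^ 2) -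
        Complex.I * (Real.sqrt ((k₂ * m₂) / (k₁ * m₁)) : ℂ) * (Real.sqrt (1 - η ^ 2) : ℂ) *
          (Efn δ₁ * Efn δ₂) *
        (Complex.I * (Real.sqrt ((k₁ * m₁) / (k₂ * m₂)) : ℂ) * (Real.sqrt (1 - η ^ 2) : ℂ) *
          (Efn δ₁ * Efn δ₂))
      = 2 * (Efn Δ₁ * Efn Δ₂ * Efn δ₁ * Efn δ₂) *
          ((Real.cos (Δ₁ + Δ₂ - δ₁ - δ₂) : ℂ) - (η : ℂ) * (Real.cos (Δ₁ - Δ₂ - δ₁ + δ₂) : ℂ)) := by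
    rw [← key_id Δ₁ Δ₂ δ₁ δ₂ η]
    set a := (Real.sqrt ((k₂ * m₂) / (k₁ * m₁)) : ℂ)
    set b := (Real.sqrt ((k₁ * m₁) / (k₂ * m₂)) : ℂ)
    set s := (Real.sqrt (1 - η ^ 2) : ℂ)
    set P := (Efn δ₁ * Efn δ₂) ^ 2
    linear_combination (-(a * b * s * s * ((Efn δ₁ * Efn δ₂) ^ 2))) * Complex.I_mul_I +
      (s * s * ((Efn δ₁ * Efn δ₂) ^ 2)) * hsC + ((Efn δ₁ * Efn δ₂) ^ 2) * hsqC
  rw [final]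
  have hP : (2 : ℂ) * (Efn Δ₁ * Efn Δ₂ * Efn δ₁ * Efn δ₂) ≠ 0 :=
    mul_ne_zero two_ne_zero (mul_ne_zero (mul_ne_zero (mul_ne_zero (Efn_ne _) (Efn_ne _))
      (Efn_ne _)) (Efn_ne _))
  rw [mul_eq_zero, or_iff_right hP, sub_eq_zero]
  exact_mod_cast Iff.rfl
end
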